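/- Let B be a compact Hausdorff topological space, F a compact Hausdorff topological space, and proj : Z → B a (topological) fiber bundle with fiber F whose total space Z is Hausdorff, and suppose there exists a topological embedding e : F → ℝ^k for some k. Let α : Z → ℝ be a continuous function with α(z) ≥ 0 for all z ∈ Z, and set Z₀ := α⁻¹({0}). Then there exist m ∈ ℕ and a closed topological embedding h : Z → B × ℝ^m × ℝ such that: (i) the first component of h equals proj; (ii) the last component of h equals α, so the image of h is contained in B × ℝ^m × [0,∞); (iii) h⁻¹(B × ℝ^m × {0}) = Z₀; and (iv) h restricts to a topological embedding of Z₀ into B × ℝ^m × {0}. -/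

import Mathlib

/-!
Cover the compact base by finitely many trivializations `Tᵢ` and take a subordinate partition of
unity `ρᵢ`. The map `z ↦ (proj z, (ρᵢ (proj z) • e (Tᵢ z).2)ᵢ)` is continuous, and injective
because over each point some `ρᵢ` is nonzero and `Tᵢ` is injective on the fibres there. Appending
`α` keeps it injective; since the total space is compact (locally it is `K × F` with `K` compact),
a continuous injection into a Hausdorff space is a closed embedding.
-/

open Bundle Topology Function Set

namespace Bundle.Trivialization

variable {B F Z : Type*} [TopologicalSpace B] [TopologicalSpace F] [TopologicalSpace Z]
  {proj : Z → B}

theorem isCompact_preimage [CompactSpace F] (T : Trivialization F proj) {K : Set B}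
    (hK : IsCompact K) (hKT : K ⊆ T.baseSet) : IsCompact (proj ⁻¹' K) :=
  have : CompactSpace K := isCompact_iff_compactSpace.1 hK
  isCompact_iff_compactSpace.2 (T.preimageHomeomorph hKT).symm.compactSpace

variable {𝕜 V : Type*} [AddCommGroup V]

theorem continuous_smul_snd [Semiring 𝕜] [Module 𝕜 V] [TopologicalSpace 𝕜] [TopologicalSpace V] [ContinuousSMul 𝕜 V]
    (T : Trivialization F proj) (hproj : Continuous proj) {ρ : B → 𝕜} (hρ : Continuous ρ)
    (hρT : tsupport ρ ⊆ T.baseSet) {f : F → V} (hf : Continuous f) :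
    Continuous fun z => ρ (proj z) • f (T z).2 := by
  refine ContinuousOn.continuous_of_tsupport_subset ?_ T.open_source ?_
  · exact (hρ.comp hproj).continuousOn.smul
      (hf.comp_continuousOn (continuous_snd.comp_continuousOn T.continuousOn_toFun))
  · calc tsupport _ ⊆ tsupport (ρ ∘ proj) := tsupport_smul_subset_left _ _
      _ ⊆ proj ⁻¹' tsupport ρ := tsupport_comp_subset_preimage ρ hproj
      _ ⊆ proj ⁻¹' T.baseSet := preimage_mono hρT
      _ = T.source := T.source_eq.symm

theorem injective_proj_prod_smul_snd [Field 𝕜] [Module 𝕜 V] {ι : Type*} (T : ι → Trivialization F proj)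
    {ρ : ι → B → 𝕜} (hρT : ∀ i, support (ρ i) ⊆ (T i).baseSet) (hρ : ∀ b, ∃ i, ρ i b ≠ 0)
    {f : F → V} (hf : Injective f) :
    Injective fun z => (proj z, fun i => ρ i (proj z) • f (T i z).2) := by
  intro z z' hzz'
  obtain ⟨hproj, hsmul⟩ := Prod.mk.inj hzz'
  obtain ⟨i, hi⟩ := hρ (proj z)
  have hsnd : (T i z).2 = (T i z').2 :=
    hf (smul_right_injective V hi (by simpa only [hproj] using congrFun hsmul i))
  have hz : z ∈ (T i).source := (T i).mem_source.2 (hρT i hi)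
  have hz' : z' ∈ (T i).source := (T i).mem_source.2 (hproj ▸ hρT i hi)
  rw [← (T i).symm_apply_mk_proj hz, ← (T i).symm_apply_mk_proj hz', hproj, hsnd]

end Bundle.Trivialization

theorem exists_finset_partitionOfUnity_isSubordinate {X : Type*} [TopologicalSpace X]
    [CompactSpace X] [T2Space X] (U : X → Set X) (hU : ∀ x, IsOpen (U x)) (hxU : ∀ x, x ∈ U x) :
    ∃ (t : Finset X) (ρ : PartitionOfUnity t X), ρ.IsSubordinate fun i => U i := by
  obtain ⟨t, ht⟩ := isCompact_univ.elim_finite_subcover U hU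
    fun x _ => mem_iUnion.2 ⟨x, hxU x⟩
  exact ⟨t, PartitionOfUnity.exists_isSubordinate isClosed_univ _ (fun i => hU i)
    fun x _ => by simpa using ht (mem_univ x)⟩

namespace FiberBundle

variable {B : Type*} (F : Type*) [TopologicalSpace B] [TopologicalSpace F] (E : B → Type*)
  [TopologicalSpace (TotalSpace F E)] [∀ b, TopologicalSpace (E b)] [FiberBundle F E]

theorem compactSpace_totalSpace [CompactSpace B] [LocallyCompactSpace B] [CompactSpace F] :
    CompactSpace (TotalSpace F E) := by
  have hK (b : B) : ∃ K ∈ 𝓝 b, K ⊆ (trivializationAt F E b).baseSet ∧ IsCompact K :=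
    local_compact_nhds ((trivializationAt F E b).open_baseSet.mem_nhds
      (mem_baseSet_trivializationAt F E b))
  choose K hKb hKT hKc using hK
  obtain ⟨t, -, ht⟩ := isCompact_univ.elim_nhds_subcover K fun b _ => hKb b
  refine ⟨(t.isCompact_biUnion fun b _ =>
    (trivializationAt F E b).isCompact_preimage (hKc b) (hKT b)).of_isClosed_subset
    isClosed_univ fun z _ => ?_⟩
  simpa only [mem_iUnion₂, mem_preimage] using ht (mem_univ z.proj)

theorem exists_continuous_injective_proj_prod_euclidean [CompactSpace B] [T2Space B]
    {V : Type*} [NormedAddCommGroup V] [NormedSpace ℝ V] [FiniteDimensional ℝ V] {e : F → V}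
    (he : Continuous e) (he' : Injective e) :
    ∃ (m : ℕ) (g : TotalSpace F E → EuclideanSpace ℝ (Fin m)),
      Continuous g ∧ Injective fun z => (z.proj, g z) := by
  obtain ⟨t, ρ, hρ⟩ := exists_finset_partitionOfUnity_isSubordinate
    (fun b => (trivializationAt F E b).baseSet) (fun b => (trivializationAt F E b).open_baseSet)
    (mem_baseSet_trivializationAt F E)
  let G : TotalSpace F E → (t → V) := fun z i => ρ i z.proj • e (trivializationAt F E i z).2
  have hG : Continuous G := continuous_pi fun i =>
    (trivializationAt F E i).continuous_smul_snd (continuous_proj F E) (ρ i).continuous (hρ i) he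
  have hGinj : Injective fun z : TotalSpace F E => (z.proj, G z) :=
    Trivialization.injective_proj_prod_smul_snd (fun i : t => trivializationAt F E i)
      (fun i => (subset_tsupport _).trans (hρ i))
      (fun b => (ρ.exists_pos (mem_univ b)).imp fun _ => ne_of_gt) he'
  exact ⟨_, toEuclidean ∘ G, toEuclidean.continuous.comp hG,
    (injective_id.prodMap toEuclidean.injective).comp hGinj⟩

end FiberBundle

theorem stmt4_general (B F : Type*) [TopologicalSpace B] [CompactSpace B] [T2Space B]
    [TopologicalSpace F] [CompactSpace F]
    (E : B → Type*) [TopologicalSpace (TotalSpace F E)] [∀ b, TopologicalSpace (E b)]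
    [FiberBundle F E]
    (k : ℕ) (e : F → EuclideanSpace ℝ (Fin k)) (he : IsEmbedding e)
    (α : TotalSpace F E → ℝ) (hα : Continuous α) (hα0 : ∀ z, 0 ≤ α z) :
    ∃ (m : ℕ) (h : TotalSpace F E → B × EuclideanSpace ℝ (Fin m) × ℝ),
      IsClosedEmbedding h ∧
      (∀ z, (h z).1 = z.proj) ∧
      (∀ z, (h z).2.2 = α z) ∧
      (∀ z, 0 ≤ (h z).2.2) ∧
      (h ⁻¹' {p | p.2.2 = 0} = α ⁻¹' {0}) ∧
      IsEmbedding ((α ⁻¹' {0}).restrict h) ∧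
      (∀ z ∈ α ⁻¹' {0}, (h z).2.2 = 0) := by
  have := FiberBundle.compactSpace_totalSpace F E
  obtain ⟨m, g, hg, hinj⟩ :=
    FiberBundle.exists_continuous_injective_proj_prod_euclidean F E he.continuous he.injective
  have hh : IsClosedEmbedding fun z : TotalSpace F E => (z.proj, g z, α z) :=
    ((FiberBundle.continuous_proj F E).prodMk (hg.prodMk hα)).isClosedEmbedding
      fun z z' hzz' => hinj (Prod.ext (congrArg (·.1) hzz') (congrArg (·.2.1) hzz'))
  exact ⟨m, _, hh, fun _ => rfl, fun _ => rfl, hα0, rfl, hh.isEmbedding.comp .subtypeVal,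
    fun _ => id⟩

/-- Given a fiber bundle over a compact Hausdorff base with compact Hausdorff fiber
embeddable in `ℝ^k` and Hausdorff total space `Z`, and a continuous nonnegative
function `α : Z → ℝ` with zero set `Z₀`, there is a closed embedding
`h : Z → B × ℝ^m × ℝ` whose first component is the bundle projection and whose
last component is `α`; in particular the image of `h` lies in `B × ℝ^m × [0,∞)`,
`h⁻¹(B × ℝ^m × {0}) = Z₀`, and `h` restricts to an embedding of `Z₀` into
`B × ℝ^m × {0}`. -/
theorem stmt4 (B F : Type*) [TopologicalSpace B] [CompactSpace B] [T2Space B]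
    [TopologicalSpace F] [CompactSpace F] [T2Space F]
    (E : B → Type*) [TopologicalSpace (TotalSpace F E)] [∀ b, TopologicalSpace (E b)]
    [FiberBundle F E] [T2Space (TotalSpace F E)]
    (k : ℕ) (e : F → EuclideanSpace ℝ (Fin k)) (he : IsEmbedding e)
    (α : TotalSpace F E → ℝ) (hα : Continuous α) (hα0 : ∀ z, 0 ≤ α z) :
    ∃ (m : ℕ) (h : TotalSpace F E → B × EuclideanSpace ℝ (Fin m) × ℝ),
      IsClosedEmbedding h ∧
      (∀ z, (h z).1 = z.proj) ∧
      (∀ z, (h z).2.2 = α z) ∧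
      (∀ z, 0 ≤ (h z).2.2) ∧
      (h ⁻¹' {p | p.2.2 = 0} = α ⁻¹' {0}) ∧
      IsEmbedding ((α ⁻¹' {0}).restrict h) ∧
      (∀ z ∈ α ⁻¹' {0}, (h z).2.2 = 0) :=
  stmt4_general B F E k e he α hα hα0
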